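/- arXiv:2309.09542 — 3 statements merged into one kernel-verified Lean document; each statement's English description precedes it below -/
import Mathlib

section
/- Let P be a program with deterministic small-step semantics and S a standard security context for P. The Kripke interpretation of P and S satisfies perfect recall: for every agent A, every temporally sound formula φ, and every world w, if w ⊨ [K^C_A]φ then w ⊨ □[K^C_A]φ (i.e., every T-successor w' of w satisfies [K^C_A]φ). -/
/-!
Security properties through the lens of modal logic: Kripke interpretations
of deterministic programs with a standard security context.

A program is given by its text, a domain of values for each variable, and a
deterministic small-step semantics, modelled as a partial function `step` on
configurations (`none` meaning that the configuration admits no further step).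
Worlds of the Kripke interpretation are the finite traces from valid initial
stores; by determinism such a trace is represented by its initial store
together with its length.
-/

attribute [local instance] Classical.propDecidable

namespace SecModal

/-- The usual box modality for a relation `R`: `φ` holds at all `R`-successors. -/
def box {W : Type} (R : W → W → Prop) (φ : W → Prop) (w : W) : Prop :=
  ∀ w', R w w' → φ w'

/-- The usual diamond modality for a relation `R`: `φ` holds at some `R`-successor. -/
def dia {W : Type} (R : W → W → Prop) (φ : W → Prop) (w : W) : Prop :=
  ∃ w', R w w' ∧ φ w'

/-- Temporal soundness of a formula `φ` with respect to a time relation `T`: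
at every world, `φ` holds iff `□φ` holds. -/
def TS {W : Type} (T : W → W → Prop) (φ : W → Prop) : Prop :=
  ∀ w, φ w ↔ box T φ w

/-- A store assigns a value to each variable. -/
abbrev Store (Var Val : Type) : Type := Var → Val

/-- A configuration pairs a program text with a store. -/
abbrev Config (Prog Var Val : Type) : Type := Prog × Store Var Val

/-- Restriction of a store to a set of variables `S` (`none` outside `S`). -/
noncomputable def restrict {Var Val : Type} (S : Set Var) (σ : Store Var Val) : Var → Option Val :=
  fun v => if v ∈ S then some (σ v) else none

/-- Destuttering: removal of consecutive duplicate entries of a list. -/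
noncomputable def dest {α : Type} (l : List α) : List α :=
  l.destutter (· ≠ ·)

/-- A program `⟨p, V, I⟩` with deterministic small-step semantics:
`text` is the program text `p`, `dom` assigns to each variable its domain of
values `I(v)`, and `step` is the deterministic small-step transition function. -/
structure Program (Prog Var Val : Type) : Type where
  text : Prog
  dom : Var → Set Val
  step : Config Prog Var Val → Option (Config Prog Var Val)

namespace Program

variable {Prog Var Val Agent : Type}

/-- `n`-fold iteration of the small-step semantics. -/
def iter (P : Program Prog Var Val) : ℕ → Config Prog Var Val → Option (Config Prog Var Val)
  | 0, c => some c
  | n + 1, c => (P.iter n c).bind P.step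

/-- The configuration reached after `k` steps from `c` (defaulting to `c` when undefined). -/
def configAt (P : Program Prog Var Val) (c : Config Prog Var Val) (k : ℕ) :
    Config Prog Var Val :=
  (P.iter k c).getD c

/-- The view, through the variables in `S`, of the trace of length `n` (i.e. with `n + 1`
configurations) starting at `c`: the destuttering of the list of restricted stores. -/
noncomputable def pview (P : Program Prog Var Val) (S : Set Var) (c : Config Prog Var Val)
    (n : ℕ) : List (Var → Option Val) :=
  dest ((List.range (n + 1)).map fun k => restrict S (P.configAt c k).2)

/-- The maximal trace generated from `c` halts. -/
def halts (P : Program Prog Var Val) (c : Config Prog Var Val) : Prop :=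
  ∃ n c', P.iter n c = some c' ∧ P.step c' = none

/-- The maximal trace generated from `c` diverges (is infinite). -/
def diverges (P : Program Prog Var Val) (c : Config Prog Var Val) : Prop :=
  ¬ P.halts c

/-- The (possibly infinite) views through `S` of the maximal traces generated from
`c₁` and `c₂` are equal: every view of a finite prefix of the one is a prefix of a view
of a finite prefix of the other, and vice versa. -/
def mviewEq (P : Program Prog Var Val) (S : Set Var) (c₁ c₂ : Config Prog Var Val) : Prop :=
  (∀ n, (P.iter n c₁).isSome = true →
    ∃ m, (P.iter m c₂).isSome = true ∧ P.pview S c₁ n <+: P.pview S c₂ m) ∧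
  (∀ n, (P.iter n c₂).isSome = true →
    ∃ m, (P.iter m c₁).isSome = true ∧ P.pview S c₂ n <+: P.pview S c₁ m)

/-- A valid initial store: every variable takes a value in its domain. -/
def ValidStore (P : Program Prog Var Val) (σ : Store Var Val) : Prop :=
  ∀ v, σ v ∈ P.dom v

/-- Worlds of the Kripke interpretation of `P`: the finite traces of `P`, represented
by a valid initial store together with a length for which the iterated step is defined
(the trace itself is recovered by determinism of the semantics). -/
structure World (P : Program Prog Var Val) : Type where
  init : Store Var Val
  valid : ∀ v, init v ∈ P.dom v
  len : ℕ
  defined : (P.iter len (P.text, init)).isSome = true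

/-- The store at time `k` along the trace `w`. -/
def World.store {P : Program Prog Var Val} (w : P.World) (k : ℕ) : Store Var Val :=
  (P.configAt (P.text, w.init) k).2

/-- The view of the world (finite trace) `w` through the set of variables `S`. -/
noncomputable def wview (P : Program Prog Var Val) (S : Set Var) (w : P.World) :
    List (Var → Option Val) :=
  P.pview S (P.text, w.init) w.len

/-- The time relation `T` of the Kripke interpretation: `w T w'` iff the trace `w`
is a (non-strict) prefix of the trace `w'`. -/
def Ttime (P : Program Prog Var Val) (w w' : P.World) : Prop :=
  w.init = w'.init ∧ w.len ≤ w'.len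

/-- The knowledge relation `K^C_A = K^P_A` of an agent with read set `RA`:
two worlds are related iff the agent's views of them coincide. -/
def Krel (P : Program Prog Var Val) (RA : Set Var) (w w' : P.World) : Prop :=
  P.wview RA w = P.wview RA w'

/-- The write-capability relation `W^C_A` of an agent with write set `WA`:
two worlds are related iff both are initial (length-1, i.e. 0 steps) traces and
their `fix`-projections (to the complement of `WA`) coincide. -/
def WCrel (P : Program Prog Var Val) (WA : Set Var) (w w' : P.World) : Prop :=
  w.len = 0 ∧ w'.len = 0 ∧ P.wview WAᶜ w = P.wview WAᶜ w'

/-- The write-permission relation `W^P_A` of an agent with write set `WA`: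
two worlds are related iff their `fix`-projections coincide. -/
def WPrel (P : Program Prog Var Val) (WA : Set Var) (w w' : P.World) : Prop :=
  P.wview WAᶜ w = P.wview WAᶜ w'

/-- The halting atom `↓`: the trace `w` has halted, i.e. its last configuration
admits no further step. -/
def halted (P : Program Prog Var Val) (w : P.World) : Prop :=
  P.step (P.configAt (P.text, w.init) w.len) = none

end Program

end SecModal

/-!
Along a trace the destuttered view of an agent only grows by appending, and conversely every
nonempty prefix of the view of a trace is the view of some prefix of that trace. So if `w'`
extends `w` and `w''` looks like `w'` to the agent, the view of `w` is a prefix of the view of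
`w''`, hence equal to the view of a prefix `w₀` of `w''`. The hypothesis gives `φ` at `w₀`, and
temporal soundness carries it forward to `w''`.
-/

namespace List

variable {α : Type*} {R : α → α → Prop} [DecidableRel R]

theorem singleton_prefix_destutter' (a : α) (l : List α) : [a] <+: l.destutter' R a := by
  cases l with
  | nil => exact prefix_refl _
  | cons b l =>
    rw [destutter'_cons]
    split_ifs
    · exact ⟨_, rfl⟩
    · exact singleton_prefix_destutter' a l

theorem IsPrefix.destutter' {l₁ l₂ : List α} (h : l₁ <+: l₂) (a : α) :
    l₁.destutter' R a <+: l₂.destutter' R a := by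
  induction l₁ generalizing l₂ a with
  | nil => exact singleton_prefix_destutter' a l₂
  | cons b l₁ ih =>
    obtain ⟨l₂, rfl, hl⟩ := cons_prefix_iff.mp h
    simp only [destutter'_cons]
    split_ifs
    · exact (prefix_cons_inj a).mpr (ih hl b)
    · exact ih hl a

theorem IsPrefix.destutter {l₁ l₂ : List α} (h : l₁ <+: l₂) :
    l₁.destutter R <+: l₂.destutter R := by
  cases l₁ with
  | nil => exact nil_prefix
  | cons a l₁ =>
    obtain ⟨l₂, rfl, hl⟩ := cons_prefix_iff.mp h
    simpa only [destutter_cons'] using hl.destutter' (R := R) a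

theorem exists_prefix_destutter'_eq {p : List α} (a : α) (l : List α)
    (h : p <+: l.destutter' R a) (hp : p ≠ []) : ∃ q, q <+: l ∧ q.destutter' R a = p := by
  induction l generalizing a p with
  | nil =>
    obtain ⟨t, rfl, ht⟩ := (prefix_cons_iff.mp h).resolve_left hp
    exact ⟨[], nil_prefix, by rw [prefix_nil.mp ht, destutter'_nil]⟩
  | cons b l ih =>
    rw [destutter'_cons] at h
    split_ifs at h with hab
    · obtain ⟨t, rfl, ht⟩ := (prefix_cons_iff.mp h).resolve_left hp
      rcases eq_or_ne t [] with rfl | htne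
      · exact ⟨[], nil_prefix, destutter'_nil R⟩
      · obtain ⟨q, hq, rfl⟩ := ih b ht htne
        exact ⟨b :: q, (prefix_cons_inj b).mpr hq, destutter'_cons_pos q hab⟩
    · obtain ⟨q, hq, rfl⟩ := ih a h hp
      exact ⟨b :: q, (prefix_cons_inj b).mpr hq, destutter'_cons_neg q hab⟩

theorem exists_prefix_destutter_eq {p l : List α} (h : p <+: l.destutter R) :
    ∃ q, q <+: l ∧ q.destutter R = p := by
  rcases eq_or_ne p [] with rfl | hp
  · exact ⟨[], nil_prefix, destutter_nil R⟩
  cases l with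
  | nil => exact absurd (prefix_nil.mp h) hp
  | cons a l =>
    obtain ⟨q, hq, rfl⟩ := exists_prefix_destutter'_eq a l h hp
    exact ⟨a :: q, (prefix_cons_inj a).mpr hq, destutter_cons' q R⟩

theorem prefix_range_iff {l : List ℕ} {n : ℕ} : l <+: range n ↔ ∃ m ≤ n, l = range m := by
  constructor
  · intro h
    have hl := prefix_iff_eq_take.mp h
    rw [take_range] at hl
    exact ⟨_, min_le_right _ _, hl⟩
  · rintro ⟨m, hm, rfl⟩
    rw [prefix_iff_eq_take, take_range, length_range, min_eq_left hm]

end List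

namespace SecModal

namespace Program

variable {Prog Var Val : Type} (P : Program Prog Var Val)

theorem antitone_iter_isSome (c : Config Prog Var Val) :
    Antitone fun n => (P.iter n c).isSome = true :=
  antitone_nat_of_succ_le fun _ h => Option.isSome_of_isSome_bind h

theorem pview_prefix_pview_of_le (S : Set Var) (c : Config Prog Var Val) {m n : ℕ}
    (h : m ≤ n) : P.pview S c m <+: P.pview S c n :=
  ((List.prefix_range_iff.mpr ⟨m + 1, by omega, rfl⟩).map _).destutter

theorem exists_pview_eq_of_prefix {S : Set Var} {c : Config Prog Var Val} {n : ℕ}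
    {p : List (Var → Option Val)} (h : p <+: P.pview S c n) (hp : p ≠ []) :
    ∃ m ≤ n, P.pview S c m = p := by
  obtain ⟨q, hq, rfl⟩ := List.exists_prefix_destutter_eq h
  obtain ⟨r, hr, rfl⟩ := List.prefix_map_iff.mp hq
  obtain ⟨m, hm, rfl⟩ := List.prefix_range_iff.mp hr
  cases m with
  | zero => exact absurd (List.destutter_nil _) hp
  | succ m => exact ⟨m, by omega, rfl⟩

theorem wview_ne_nil (S : Set Var) (w : P.World) : P.wview S w ≠ [] := by
  simp [wview, pview, dest, List.destutter_eq_nil]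

theorem wview_prefix_of_Ttime (S : Set Var) {w w' : P.World} (h : P.Ttime w w') :
    P.wview S w <+: P.wview S w' := by
  rw [wview, wview, h.1]
  exact P.pview_prefix_pview_of_le S _ h.2

theorem exists_Ttime_wview_eq {S : Set Var} {w : P.World} {p : List (Var → Option Val)}
    (h : p <+: P.wview S w) (hp : p ≠ []) : ∃ w₀, P.Ttime w₀ w ∧ P.wview S w₀ = p := by
  obtain ⟨m, hm, hview⟩ := P.exists_pview_eq_of_prefix h hp
  exact ⟨⟨w.init, w.valid, m, P.antitone_iter_isSome _ hm w.defined⟩, ⟨rfl, hm⟩, hview⟩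

end Program

/-- The Kripke interpretation of a program `P` with standard security
context (read sets `Rd`) satisfies perfect recall: for every agent `A`, every
temporally sound formula `φ`, and every world `w`, if `w ⊨ [K^C_A]φ` then
`w ⊨ □[K^C_A]φ`. -/
theorem stmt_1 {Prog Var Val Agent : Type} (P : Program Prog Var Val)
    (Rd : Agent → Set Var) (A : Agent) (φ : P.World → Prop)
    (hts : TS P.Ttime φ) (w : P.World)
    (h : box (P.Krel (Rd A)) φ w) :
    box P.Ttime (box (P.Krel (Rd A)) φ) w := by
  intro w' hT w'' hK
  obtain ⟨w₀, hT₀, hview⟩ :=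
    P.exists_Ttime_wview_eq (hK ▸ P.wview_prefix_of_Ttime (Rd A) hT) (P.wview_ne_nil (Rd A) w)
  exact (hts w₀).mp (h w₀ hview.symm) w'' hT₀

end SecModal
end

section
/- Let P be a program with deterministic small-step semantics and S a standard security context for P. Then P and S satisfy trace confidentiality if and only if the Kripke interpretation of P and S satisfies confidentiality, i.e., for all agents A, all worlds w, and all temporally sound formulae φ: w ⊨ ◇[K^C_A]φ implies w ⊨ [K^P_A]◇φ. -/
/-!
Security properties through the lens of modal logic: Kripke interpretations
of deterministic programs with a standard security context.

A program is given by its text, a domain of values for each variable, and a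
deterministic small-step semantics, modelled as a partial function `step` on
configurations (`none` meaning that the configuration admits no further step).
Worlds of the Kripke interpretation are the finite traces from valid initial
stores; by determinism such a trace is represented by its initial store
together with its length.
-/

attribute [local instance] Classical.propDecidable

namespace SecModal

/-- Trace confidentiality (Def. confts): for all agents `A` and all pairs of valid
initial stores that agree on the `A`-readable variables (i.e. differ only in
assignments to the secret-to-`A` variables `X = V ∖ R(A)`), the views of the two
generated maximal traces coincide. -/
def TraceConf {Prog Var Val Agent : Type} (P : Program Prog Var Val)
    (Rd : Agent → Set Var) : Prop :=
  ∀ (A : Agent) (σ1 σ2 : Store Var Val),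
    P.ValidStore σ1 → P.ValidStore σ2 → (∀ v ∈ Rd A, σ1 v = σ2 v) →
    P.mviewEq (Rd A) (P.text, σ1) (P.text, σ2)

section Aux

variable {α : Type} {R : α → α → Prop} [DecidableRel R]

lemma destutter'_head_len (l : List α) : ∀ a : α,
    ∃ t, l.destutter' R a = a :: t ∧ t.length ≤ l.length := by
  induction l with
  | nil => exact fun a => ⟨[], by simp [List.destutter'], by simp⟩
  | cons b l ih =>
    intro a
    rw [List.destutter'_cons]
    by_cases h : R a b
    · obtain ⟨t, ht, hlen⟩ := ih b
      rw [if_pos h, ht]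
      exact ⟨b :: t, rfl, by simpa using hlen⟩
    · obtain ⟨t, ht, hlen⟩ := ih a
      rw [if_neg h, ht]
      exact ⟨t, rfl, Nat.le_succ_of_le hlen⟩

lemma destutter'_append_aux (l₂ : List α) : ∀ (l : List α) (a : α),
    ∃ t, (l ++ l₂).destutter' R a = l.destutter' R a ++ t ∧ t.length ≤ l₂.length := by
  intro l
  induction l with
  | nil =>
    intro a
    obtain ⟨t, ht, hlen⟩ := destutter'_head_len (R := R) l₂ a
    exact ⟨t, by simpa [List.destutter'] using ht, hlen⟩
  | cons b l ih =>
    intro a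
    by_cases h : R a b
    · obtain ⟨t, ht, hlen⟩ := ih b
      refine ⟨t, ?_, hlen⟩
      rw [List.cons_append, List.destutter'_cons, List.destutter'_cons, if_pos h, if_pos h,
        ht, List.cons_append]
    · obtain ⟨t, ht, hlen⟩ := ih a
      refine ⟨t, ?_, hlen⟩
      rw [List.cons_append, List.destutter'_cons, List.destutter'_cons, if_neg h, if_neg h, ht]

end Aux

section DestLemmas

variable {α : Type}

lemma dest_cons_head_len (a : α) (l : List α) :
    ∃ t, dest (a :: l) = a :: t ∧ t.length ≤ l.length := by
  rw [dest, List.destutter_cons']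
  exact destutter'_head_len l a

lemma dest_append_prefix (a : α) (l l₂ : List α) :
    ∃ t, dest ((a :: l) ++ l₂) = dest (a :: l) ++ t ∧ t.length ≤ l₂.length := by
  rw [dest, dest, List.cons_append, List.destutter_cons', List.destutter_cons']
  exact destutter'_append_aux l₂ l a

end DestLemmas

namespace Program

variable {Prog Var Val : Type} (P : Program Prog Var Val) (S : Set Var)

lemma iter_succ_isSome {c : Config Prog Var Val} {n : ℕ}
    (h : (P.iter (n + 1) c).isSome = true) : (P.iter n c).isSome = true := by
  rw [Program.iter] at h
  cases hn : P.iter n c with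
  | none => rw [hn] at h; simp at h
  | some c' => simp

lemma iter_isSome_of_le {c : Config Prog Var Val} {k m : ℕ} (hkm : k ≤ m)
    (h : (P.iter m c).isSome = true) : (P.iter k c).isSome = true := by
  induction m with
  | zero => simpa [Nat.le_zero.mp hkm] using h
  | succ m ih =>
    rcases Nat.eq_or_lt_of_le hkm with rfl | hlt
    · exact h
    · exact ih (Nat.lt_succ_iff.mp hlt) (P.iter_succ_isSome h)

lemma pview_cons (c : Config Prog Var Val) (n : ℕ) :
    ∃ t, P.pview S c n = restrict S c.2 :: t ∧ t.length ≤ n := by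
  rw [Program.pview, List.range_succ_eq_map, List.map_cons]
  have h0 : P.configAt c 0 = c := by simp [Program.configAt, Program.iter]
  rw [h0]
  obtain ⟨t, ht, hlen⟩ := dest_cons_head_len (restrict S c.2)
    ((List.map Nat.succ (List.range n)).map fun k => restrict S (P.configAt c k).2)
  exact ⟨t, ht, by simpa using hlen⟩

lemma pview_zero (c : Config Prog Var Val) : P.pview S c 0 = [restrict S c.2] := by
  obtain ⟨t, ht, hlen⟩ := P.pview_cons S c 0
  rw [ht, List.eq_nil_of_length_eq_zero (Nat.le_zero.mp hlen)]

lemma pview_mono (c : Config Prog Var Val) {n m : ℕ} (h : n ≤ m) :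
    ∃ t, P.pview S c m = P.pview S c n ++ t ∧ t.length ≤ m - n := by
  obtain ⟨d, rfl⟩ := Nat.exists_eq_add_of_le h
  rw [Program.pview, Program.pview]
  have h1 : n + d + 1 = (n + 1) + d := by omega
  rw [h1, List.range_add, List.map_append, List.range_succ_eq_map, List.map_cons]
  obtain ⟨t, ht, hlen⟩ := dest_append_prefix (restrict S (P.configAt c 0).2)
    ((List.map Nat.succ (List.range n)).map fun k => restrict S (P.configAt c k).2)
    (((List.range d).map (n + 1 + ·)).map fun k => restrict S (P.configAt c k).2)
  rw [List.cons_append] at ht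
  exact ⟨t, ht, by simpa using hlen⟩

lemma pview_prefix (c : Config Prog Var Val) {n m : ℕ} (h : n ≤ m) :
    P.pview S c n <+: P.pview S c m := by
  obtain ⟨t, ht, -⟩ := P.pview_mono S c h
  exact ⟨t, ht.symm⟩

lemma exists_pview_of_length (c : Config Prog Var Val) (L : ℕ) (hL : 1 ≤ L) :
    ∀ m, L ≤ (P.pview S c m).length → ∃ k, k ≤ m ∧ (P.pview S c k).length = L := by
  intro m
  induction m with
  | zero =>
    intro hm
    refine ⟨0, le_refl _, ?_⟩
    rw [P.pview_zero S c] at hm ⊢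
    simp at hm ⊢
    omega
  | succ m ih =>
    intro hm
    by_cases h : L ≤ (P.pview S c m).length
    · obtain ⟨k, hk, he⟩ := ih h
      exact ⟨k, Nat.le_succ_of_le hk, he⟩
    · obtain ⟨t, ht, hlen⟩ := P.pview_mono S c (Nat.le_succ m)
      rw [ht] at hm
      rw [List.length_append] at hm
      refine ⟨m + 1, le_refl _, ?_⟩
      rw [ht, List.length_append]
      omega

lemma reach (c : Config Prog Var Val) (V : List (Var → Option Val)) (hV : 1 ≤ V.length)
    {m : ℕ} (hm : (P.iter m c).isSome = true) (hpre : V <+: P.pview S c m) :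
    ∃ k, (P.iter k c).isSome = true ∧ P.pview S c k = V := by
  obtain ⟨k, hk, hlen⟩ := P.exists_pview_of_length S c V.length hV m hpre.length_le
  refine ⟨k, P.iter_isSome_of_le hk hm, ?_⟩
  exact (List.prefix_of_prefix_length_le (P.pview_prefix S c hk) hpre (le_of_eq hlen)).eq_of_length
    hlen

end Program

lemma Program.agree_of_wview_eq {Prog Var Val : Type} {P : Program Prog Var Val} {S : Set Var}
    {w u : P.World} (h : P.wview S w = P.wview S u) : ∀ v ∈ S, w.init v = u.init v := by
  obtain ⟨t1, h1, -⟩ := P.pview_cons S (P.text, w.init) w.len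
  obtain ⟨t2, h2, -⟩ := P.pview_cons S (P.text, u.init) u.len
  rw [Program.wview, Program.wview, h1, h2] at h
  have h0 : restrict S w.init = restrict S u.init := by
    simpa using congrArg List.head? h
  intro v hv
  have := congrFun h0 v
  simpa [restrict, hv] using this

/-- `P` and `S` satisfy trace confidentiality iff the Kripke
interpretation of `P` and `S` satisfies confidentiality: for all agents `A`, worlds
`w`, and temporally sound `φ`, `w ⊨ ◇[K^C_A]φ` implies `w ⊨ [K^P_A]◇φ`. -/
theorem stmt_3 {Prog Var Val Agent : Type} (P : Program Prog Var Val)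
    (Rd : Agent → Set Var) :
    TraceConf P Rd ↔
      (∀ (A : Agent) (w : P.World) (φ : P.World → Prop), TS P.Ttime φ →
        dia P.Ttime (box (P.Krel (Rd A)) φ) w →
        box (P.Krel (Rd A)) (dia P.Ttime φ) w) := by
  constructor
  · -- Trace confidentiality implies Kripke confidentiality
    intro hTC A w φ hTS hdia u hKwu
    obtain ⟨w', ⟨hinit, hlen⟩, hbox⟩ := hdia
    have hKwu' : P.wview (Rd A) w = P.wview (Rd A) u := hKwu
    have hagree : ∀ v ∈ Rd A, w.init v = u.init v := Program.agree_of_wview_eq hKwu'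
    have hmv := hTC A w.init u.init w.valid u.valid hagree
    have hw'def : (P.iter w'.len (P.text, w.init)).isSome = true := by
      rw [hinit]; exact w'.defined
    obtain ⟨m, hmdef, hpre⟩ := hmv.1 w'.len hw'def
    have hV1 : 1 ≤ (P.pview (Rd A) (P.text, w.init) w'.len).length := by
      obtain ⟨t, ht, -⟩ := P.pview_cons (Rd A) (P.text, w.init) w'.len
      rw [ht]; simp
    obtain ⟨k, hkdef, hkeq⟩ := P.reach (Rd A) (P.text, u.init) _ hV1 hmdef hpre
    rcases le_total k u.len with hle | hle
    · -- the view of `u` itself already equals the view of `w'`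
      have h1 : P.pview (Rd A) (P.text, u.init) k <+: P.pview (Rd A) (P.text, u.init) u.len :=
        P.pview_prefix _ _ hle
      rw [hkeq] at h1
      have h2 : P.pview (Rd A) (P.text, u.init) u.len <+:
          P.pview (Rd A) (P.text, w.init) w'.len := by
        show P.wview (Rd A) u <+: _
        rw [← hKwu']
        exact P.pview_prefix _ _ hlen
      have hueq : P.pview (Rd A) (P.text, u.init) u.len =
          P.pview (Rd A) (P.text, w.init) w'.len :=
        h2.eq_of_length_le h1.length_le
      refine ⟨u, ⟨rfl, le_refl _⟩, ?_⟩
      apply hbox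
      show P.wview (Rd A) w' = P.wview (Rd A) u
      show P.pview (Rd A) (P.text, w'.init) w'.len = P.pview (Rd A) (P.text, u.init) u.len
      rw [← hinit]
      exact hueq.symm
    · -- extend `u` to length `k`
      refine ⟨⟨u.init, u.valid, k, hkdef⟩, ⟨rfl, hle⟩, ?_⟩
      apply hbox
      show P.pview (Rd A) (P.text, w'.init) w'.len = P.pview (Rd A) (P.text, u.init) k
      rw [← hinit]
      exact hkeq.symm
  · -- Kripke confidentiality implies trace confidentiality
    intro hyp A σ1 σ2 h1 h2 hagree
    have key : ∀ (τ1 τ2 : Store Var Val), P.ValidStore τ1 → P.ValidStore τ2 →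
        (∀ v ∈ Rd A, τ1 v = τ2 v) → ∀ n, (P.iter n (P.text, τ1)).isSome = true →
        ∃ m, (P.iter m (P.text, τ2)).isSome = true ∧
          P.pview (Rd A) (P.text, τ2) m = P.pview (Rd A) (P.text, τ1) n := by
      intro τ1 τ2 hv1 hv2 hag n
      induction n with
      | zero =>
        intro _
        refine ⟨0, by simp [Program.iter], ?_⟩
        rw [P.pview_zero, P.pview_zero]
        congr 1
        funext v
        by_cases hv : v ∈ Rd A
        · simp [restrict, hv, hag v hv]
        · simp [restrict, hv]
      | succ n ih =>
        intro hdef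
        have hdefn := P.iter_succ_isSome hdef
        obtain ⟨m, hm, heq⟩ := ih hdefn
        have hmono : ∀ (z z' : P.World), P.Ttime z z' →
            P.pview (Rd A) (P.text, τ1) (n + 1) <+: P.wview (Rd A) z →
            P.pview (Rd A) (P.text, τ1) (n + 1) <+: P.wview (Rd A) z' := by
          rintro z z' ⟨hi, hl⟩ hp
          refine hp.trans ?_
          show P.pview (Rd A) (P.text, z.init) z.len <+: P.pview (Rd A) (P.text, z'.init) z'.len
          rw [hi]
          exact P.pview_prefix _ _ hl
        have hTS : TS P.Ttime (fun z => dia P.Ttime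
            (fun z' => P.pview (Rd A) (P.text, τ1) (n + 1) <+: P.wview (Rd A) z') z) := by
          intro z
          constructor
          · rintro ⟨z1, hz1, hp⟩ z2 hz2
            rcases le_total z1.len z2.len with h | h
            · exact ⟨z2, ⟨rfl, le_refl _⟩, hmono z1 z2 ⟨hz1.1.symm.trans hz2.1, h⟩ hp⟩
            · exact ⟨z1, ⟨hz2.1.symm.trans hz1.1, h⟩, hp⟩
          · intro hb
            exact hb z ⟨rfl, le_refl _⟩
        have hconc := hyp A ⟨τ1, hv1, n, hdefn⟩ _ hTS
          ⟨⟨τ1, hv1, n + 1, hdef⟩, ⟨rfl, Nat.le_succ n⟩, by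
            intro z hz
            refine ⟨z, ⟨rfl, le_refl _⟩, ?_⟩
            have hz' : P.pview (Rd A) (P.text, τ1) (n + 1) = P.wview (Rd A) z := hz
            show P.pview (Rd A) (P.text, τ1) (n + 1) <+: P.wview (Rd A) z
            rw [← hz']⟩
        have hKwu : P.Krel (Rd A) (⟨τ1, hv1, n, hdefn⟩ : P.World) ⟨τ2, hv2, m, hm⟩ := heq.symm
        obtain ⟨u1, hTu1, u2, hTu2, hpre⟩ := hconc ⟨τ2, hv2, m, hm⟩ hKwu
        have hinit2 : τ2 = u2.init := hTu1.1.trans hTu2.1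
        have hpre' : P.pview (Rd A) (P.text, τ1) (n + 1) <+:
            P.pview (Rd A) (P.text, τ2) u2.len := by
          rw [hinit2]
          exact hpre
        have hdef2 : (P.iter u2.len (P.text, τ2)).isSome = true := by
          rw [hinit2]
          exact u2.defined
        have hV1 : 1 ≤ (P.pview (Rd A) (P.text, τ1) (n + 1)).length := by
          obtain ⟨t, ht, -⟩ := P.pview_cons (Rd A) (P.text, τ1) (n + 1)
          rw [ht]; simp
        obtain ⟨k, hkdef, hkeq⟩ := P.reach (Rd A) (P.text, τ2) _ hV1 hdef2 hpre'
        exact ⟨k, hkdef, hkeq⟩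
    refine ⟨fun n hn => ?_, fun n hn => ?_⟩
    · obtain ⟨m, hm, he⟩ := key σ1 σ2 h1 h2 hagree n hn
      exact ⟨m, hm, by rw [he]⟩
    · obtain ⟨m, hm, he⟩ := key σ2 σ1 h2 h1 (fun v hv => (hagree v hv).symm) n hn
      exact ⟨m, hm, by rw [he]⟩

end SecModal
end

section
/- Let P be a program with deterministic small-step semantics and S a standard security context for P. Then P and S satisfy termination-insensitive trace-based integrity if and only if the Kripke interpretation of P and S satisfies termination-insensitive integrity, i.e., for all agents A, all worlds w, and all temporally sound formulae φ: w ⊨ ⟨W^C_A⟩(◇↓ ∧ ◇φ) implies w ⊨ □¬↓ ∨ ◇⟨W^P_A⟩φ. -/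
/-!
Security properties through the lens of modal logic: Kripke interpretations
of deterministic programs with a standard security context.

A program is given by its text, a domain of values for each variable, and a
deterministic small-step semantics, modelled as a partial function `step` on
configurations (`none` meaning that the configuration admits no further step).
Worlds of the Kripke interpretation are the finite traces from valid initial
stores; by determinism such a trace is represented by its initial store
together with its length.
-/

attribute [local instance] Classical.propDecidable

namespace SecModal

section Aux

variable {Prog Var Val Agent : Type}

lemma iter_succ_isSome (P : Program Prog Var Val) {c : Config Prog Var Val} {n : ℕ}
    (h : (P.iter (n + 1) c).isSome = true) : (P.iter n c).isSome = true := by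
  rw [Program.iter] at h
  cases hx : P.iter n c with
  | none => rw [hx] at h; simp at h
  | some _ => simp

lemma iter_isSome_mono (P : Program Prog Var Val) {c : Config Prog Var Val} :
    ∀ {n k : ℕ}, k ≤ n → (P.iter n c).isSome = true → (P.iter k c).isSome = true := by
  intro n
  induction n with
  | zero => intro k hk h; rw [Nat.le_zero.mp hk]; exact h
  | succ n ih =>
    intro k hk h
    rcases Nat.lt_succ_iff_lt_or_eq.mp (Nat.lt_succ_of_le hk) with h' | h'
    · exact ih (Nat.lt_succ_iff.mp h') (iter_succ_isSome P h)
    · rw [h']; exact h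

lemma destutter'_append_singleton {α : Type} (R : α → α → Prop) [DecidableRel R] :
    ∀ (l : List α) (a x : α),
      List.destutter' R a (l ++ [x]) = List.destutter' R a l ∨
        List.destutter' R a (l ++ [x]) = List.destutter' R a l ++ [x] := by
  intro l
  induction l with
  | nil =>
    intro a x
    by_cases h : R a x <;> simp [List.destutter', h]
  | cons b t ih =>
    intro a x
    by_cases h : R a b
    · rcases ih b x with h' | h' <;> simp [List.destutter', h, h']
    · rcases ih a x with h' | h' <;> simp [List.destutter', h, h']

lemma dest_append_singleton {α : Type} (l : List α) (x : α) :
    dest (l ++ [x]) = dest l ∨ dest (l ++ [x]) = dest l ++ [x] := by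
  cases l with
  | nil => right; simp [dest, List.destutter, List.destutter']
  | cons a t => exact destutter'_append_singleton _ t a x

lemma pview_succ (P : Program Prog Var Val) (S : Set Var) (c : Config Prog Var Val) (n : ℕ) :
    P.pview S c (n + 1) = P.pview S c n ∨
      P.pview S c (n + 1) = P.pview S c n ++ [restrict S (P.configAt c (n + 1)).2] := by
  have : (List.range (n + 1 + 1)).map (fun k => restrict S (P.configAt c k).2)
      = (List.range (n + 1)).map (fun k => restrict S (P.configAt c k).2)
        ++ [restrict S (P.configAt c (n + 1)).2] := by
    rw [List.range_succ, List.map_append]; simp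
  rw [Program.pview, Program.pview, this]
  exact dest_append_singleton _ _

lemma pview_mono (P : Program Prog Var Val) (S : Set Var) (c : Config Prog Var Val) :
    ∀ {k n : ℕ}, k ≤ n → P.pview S c k <+: P.pview S c n := by
  intro k n hk
  induction n with
  | zero => rw [Nat.le_zero.mp hk]
  | succ n ih =>
    rcases Nat.lt_succ_iff_lt_or_eq.mp (Nat.lt_succ_of_le hk) with h' | h'
    · have h1 := ih (Nat.lt_succ_iff.mp h')
      rcases pview_succ P S c n with h2 | h2
      · rw [h2]; exact h1
      · rw [h2]; exact h1.trans (List.prefix_append _ _)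
    · rw [h']

lemma pview_zero (P : Program Prog Var Val) (S : Set Var) (c : Config Prog Var Val) :
    P.pview S c 0 = [restrict S c.2] := by
  have : List.range 1 = [0] := rfl
  simp [Program.pview, Program.configAt, Program.iter, dest, this, List.destutter,
    List.destutter']

lemma prefix_snoc {α : Type} {L l : List α} {x : α} (h : L <+: l ++ [x]) :
    L <+: l ∨ L = l ++ [x] := by
  obtain ⟨t, ht⟩ := h
  cases t with
  | nil => right; simpa using ht
  | cons y t' =>
    left
    have hlen : L.length ≤ l.length := by
      have := congrArg List.length ht
      simp at this
      omega
    have htot := List.prefix_or_prefix_of_prefix (⟨y :: t', ht⟩ : L <+: l ++ [x])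
      (List.prefix_append l [x])
    rcases htot with h' | h'
    · exact h'
    · have : l = L := h'.eq_of_length (le_antisymm h'.length_le hlen)
      rw [this]

lemma exists_pview_eq (P : Program Prog Var Val) (S : Set Var) (c : Config Prog Var Val)
    {L : List (Var → Option Val)} :
    ∀ {B a : ℕ}, a ≤ B → P.pview S c a <+: L → L <+: P.pview S c B →
      ∃ k, a ≤ k ∧ k ≤ B ∧ P.pview S c k = L := by
  intro B
  induction B with
  | zero =>
    intro a ha h1 h2
    have ha0 : a = 0 := Nat.le_zero.mp ha
    subst ha0
    exact ⟨0, le_refl _, le_refl _, (h2.sublist.antisymm h1.sublist).symm⟩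
  | succ B ih =>
    intro a ha h1 h2
    by_cases hL : L <+: P.pview S c B
    · rcases Nat.lt_succ_iff_lt_or_eq.mp (Nat.lt_succ_of_le ha) with h' | h'
      · obtain ⟨k, hk1, hk2, hk3⟩ := ih (Nat.lt_succ_iff.mp h') h1 hL
        exact ⟨k, hk1, Nat.le_succ_of_le hk2, hk3⟩
      · subst h'
        exact ⟨B + 1, le_refl _, le_refl _, (h2.sublist.antisymm h1.sublist).symm⟩
    · rcases pview_succ P S c B with he | he
      · rw [he] at h2; exact absurd h2 hL
      · rw [he] at h2
        rcases prefix_snoc h2 with h' | h'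
        · exact absurd h' hL
        · exact ⟨B + 1, ha, le_refl _, by rw [he, h']⟩

lemma halts_of_halted (P : Program Prog Var Val) (w : P.World) (hw : P.halted w) :
    P.halts (P.text, w.init) := by
  obtain ⟨c', hc'⟩ := Option.isSome_iff_exists.mp w.defined
  refine ⟨w.len, c', hc', ?_⟩
  rwa [Program.halted, Program.configAt, hc', Option.getD_some] at hw

lemma halted_world (P : Program Prog Var Val) {σ : Store Var Val}
    (hv : ∀ v, σ v ∈ P.dom v) (h : P.halts (P.text, σ)) :
    ∃ x : P.World, x.init = σ ∧ x.len ≥ 0 ∧ P.halted x := by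
  obtain ⟨n, c', hc', hs⟩ := h
  refine ⟨⟨σ, hv, n, by rw [hc']; rfl⟩, rfl, Nat.zero_le _, ?_⟩
  rw [Program.halted]
  show P.step (P.configAt (P.text, σ) n) = none
  rwa [Program.configAt, hc', Option.getD_some]


lemma restrict_eq_iff {Var Val : Type} {σ1 σ2 : Store Var Val} {X : Set Var} :
    restrict Xᶜ σ1 = restrict Xᶜ σ2 ↔ ∀ v, v ∉ X → σ1 v = σ2 v := by
  constructor
  · intro h v hv
    have h' := congrFun h v
    simpa [restrict, hv] using h'
  · intro h
    funext v
    by_cases hv : v ∈ Xᶜ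
    · simp only [restrict, if_pos hv]
      exact congrArg some (h v hv)
    · simp only [restrict, if_neg hv]

lemma key {Prog Var Val Agent : Type} (P : Program Prog Var Val) (Wr : Agent → Set Var)
    (h : ∀ (A : Agent) (w : P.World) (φ : P.World → Prop), TS P.Ttime φ →
        dia (P.WCrel (Wr A)) (fun u => dia P.Ttime P.halted u ∧ dia P.Ttime φ u) w →
        box P.Ttime (fun x => ¬ P.halted x) w ∨
          dia P.Ttime (dia (P.WPrel (Wr A)) φ) w)
    (A : Agent) (σ1 σ2 : Store Var Val) (hv1 : P.ValidStore σ1) (hv2 : P.ValidStore σ2)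
    (hagree : ∀ v, v ∉ Wr A → σ1 v = σ2 v)
    (h1 : P.halts (P.text, σ1)) (h2 : P.halts (P.text, σ2)) :
    ∀ n, (P.iter n (P.text, σ1)).isSome = true →
      ∃ m, (P.iter m (P.text, σ2)).isSome = true ∧
        P.pview (Wr A)ᶜ (P.text, σ1) n <+: P.pview (Wr A)ᶜ (P.text, σ2) m := by
  intro n hn
  set φ : P.World → Prop :=
    fun x => P.pview (Wr A)ᶜ (P.text, σ1) n <+: P.wview (Wr A)ᶜ x with hφ
  have hts : TS P.Ttime φ := by
    intro x
    constructor
    · intro hx x' hxx'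
      simp only [hφ, Program.wview] at hx ⊢
      rw [← hxx'.1]
      exact hx.trans (pview_mono P _ _ hxx'.2)
    · intro hb
      exact hb x ⟨rfl, le_refl _⟩
  have hw0 : (P.iter 0 (P.text, σ2)).isSome = true := rfl
  have hu0 : (P.iter 0 (P.text, σ1)).isSome = true := rfl
  have hmain := h A ⟨σ2, hv2, 0, hw0⟩ φ hts ?_
  · rcases hmain with hbox | ⟨w', hw', u'', hwp, hφu⟩
    · exfalso
      obtain ⟨x, hx1, _, hx3⟩ := halted_world P hv2 h2
      exact hbox x ⟨hx1.symm, Nat.zero_le _⟩ hx3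
    · have hinit' : w'.init = σ2 := hw'.1.symm
      refine ⟨w'.len, ?_, ?_⟩
      · have hd := w'.defined
        rwa [hinit'] at hd
      · have hwp' : P.wview (Wr A)ᶜ w' = P.wview (Wr A)ᶜ u'' := hwp
        have heq : P.wview (Wr A)ᶜ u'' = P.pview (Wr A)ᶜ (P.text, σ2) w'.len := by
          rw [← hwp', Program.wview, hinit']
        simp only [hφ] at hφu
        rw [← heq]
        exact hφu
  · refine ⟨⟨σ1, hv1, 0, hu0⟩, ⟨rfl, rfl, ?_⟩, ?_, ?_⟩
    · show P.pview (Wr A)ᶜ (P.text, σ2) 0 = P.pview (Wr A)ᶜ (P.text, σ1) 0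
      rw [pview_zero, pview_zero]
      exact congrArg (fun x => [x]) (restrict_eq_iff.mpr hagree).symm
    · obtain ⟨x, hx1, _, hx3⟩ := halted_world P hv1 h1
      exact ⟨x, ⟨hx1.symm, Nat.zero_le _⟩, hx3⟩
    · refine ⟨⟨σ1, hv1, n, hn⟩, ⟨rfl, Nat.zero_le _⟩, ?_⟩
      simp only [hφ, Program.wview]
      exact List.prefix_refl _

end Aux

/-- Termination-insensitive trace-based integrity (Def. inte2): for all agents `A`
and all pairs of valid initial stores that agree outside the `A`-controlled variables
`X = W(A)`, either the `fix`-projections (to `V ∖ W(A)`) of the two generated maximal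
traces coincide, or at least one of them does not halt. -/
def TITraceInt {Prog Var Val Agent : Type} (P : Program Prog Var Val)
    (Wr : Agent → Set Var) : Prop :=
  ∀ (A : Agent) (σ1 σ2 : Store Var Val),
    P.ValidStore σ1 → P.ValidStore σ2 → (∀ v, v ∉ Wr A → σ1 v = σ2 v) →
    P.mviewEq (Wr A)ᶜ (P.text, σ1) (P.text, σ2) ∨
      P.diverges (P.text, σ1) ∨ P.diverges (P.text, σ2)

/-- `P` and `S` satisfy termination-insensitive trace-based integrity
iff the Kripke interpretation of `P` and `S` satisfies termination-insensitive
integrity: for all agents `A`, worlds `w`, and temporally sound `φ`,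
`w ⊨ ⟨W^C_A⟩(◇↓ ∧ ◇φ)` implies `w ⊨ □¬↓ ∨ ◇⟨W^P_A⟩φ`. -/
theorem stmt_6 {Prog Var Val Agent : Type} (P : Program Prog Var Val)
    (Wr : Agent → Set Var) :
    TITraceInt P Wr ↔
      (∀ (A : Agent) (w : P.World) (φ : P.World → Prop), TS P.Ttime φ →
        dia (P.WCrel (Wr A)) (fun u => dia P.Ttime P.halted u ∧ dia P.Ttime φ u) w →
        box P.Ttime (fun x => ¬ P.halted x) w ∨
          dia P.Ttime (dia (P.WPrel (Wr A)) φ) w) := by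
  constructor
  · -- trace-based integrity implies the Kripke property
    intro hTI A w φ hTS hdia
    obtain ⟨u, ⟨hw0, hu0, hview⟩, ⟨th, hth, hhalt⟩, ⟨v, hv, hφv⟩⟩ := hdia
    have hagree : ∀ x, x ∉ Wr A → w.init x = u.init x := by
      rw [Program.wview, Program.wview, hw0, hu0, pview_zero, pview_zero] at hview
      exact restrict_eq_iff.mp (List.singleton_inj.mp hview)
    have hhalts2 : P.halts (P.text, u.init) := by
      have hh := halts_of_halted P th hhalt
      rwa [← hth.1] at hh
    rcases hTI A w.init u.init w.valid u.valid hagree with hmv | hd1 | hd2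
    · right
      have hvinit : v.init = u.init := hv.1.symm
      have hvdef : (P.iter v.len (P.text, u.init)).isSome = true := by
        have hd := v.defined
        rwa [hvinit] at hd
      obtain ⟨m, hmdef, hpref1⟩ := hmv.2 v.len hvdef
      obtain ⟨b, hbdef, hpref2⟩ := hmv.1 m hmdef
      have hBdef : (P.iter (max b v.len) (P.text, u.init)).isSome = true := by
        rcases max_cases b v.len with ⟨hx, _⟩ | ⟨hx, _⟩ <;> rw [hx]
        · exact hbdef
        · exact hvdef
      have hpref2' := hpref2.trans (pview_mono P (Wr A)ᶜ _ (le_max_left b v.len))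
      obtain ⟨k, hk1, hk2, hkeq⟩ :=
        exists_pview_eq P (Wr A)ᶜ (P.text, u.init) (le_max_right b v.len) hpref1 hpref2'
      refine ⟨⟨w.init, w.valid, m, hmdef⟩, ⟨rfl, ?_⟩,
        ⟨u.init, u.valid, k, iter_isSome_mono P hk2 hBdef⟩, ?_, ?_⟩
      · rw [hw0]
        exact Nat.zero_le m
      · show P.pview (Wr A)ᶜ (P.text, w.init) m = P.pview (Wr A)ᶜ (P.text, u.init) k
        exact hkeq.symm
      · exact (hTS v).mp hφv _ ⟨hvinit, hk1⟩
    · left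
      intro x hx hhx
      exact hd1 (by have hh := halts_of_halted P x hhx; rwa [← hx.1] at hh)
    · exact absurd hhalts2 hd2
  · -- the Kripke property implies trace-based integrity
    intro h A σ1 σ2 hv1 hv2 hagree
    by_cases h1 : P.halts (P.text, σ1)
    · by_cases h2 : P.halts (P.text, σ2)
      · exact Or.inl ⟨key P Wr h A σ1 σ2 hv1 hv2 hagree h1 h2,
          key P Wr h A σ2 σ1 hv2 hv1 (fun v hv => (hagree v hv).symm) h2 h1⟩
      · exact Or.inr (Or.inr h2)
    · exact Or.inr (Or.inl h1)

end SecModal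
end
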